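/- arXiv:1111.2743 — 3 statements merged into one kernel-verified Lean document; each statement's English description precedes it below -/
import Mathlib

section
/- There is an absolute constant C such that for all integers n ≥ 1, all γ > 0 and all intervals I ⊆ [0,2π), the quantity E = (1/2) ∫∫_Ω ( Kₙ(0)·Kₙ(0) − Kₙ(u−t)·Kₙ(t−u) ) du dt, where Ω = {(u,t) ∈ ℝ² : (u+t)/2 ∈ I and |u−t| < γ}, satisfies | E − |I|·γ³·n⁴/(144π²) | ≤ C · (|I|·γ³·n⁴/(144π²)) · ( n⁻¹ + γ²n² + (γ²n²)³ ). -/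
/-!
The integrand depends only on `v = u - t`:
`(2π)² (Kₙ(0)² - Kₙ(v) Kₙ(-v)) = Σ_{j,k<n} (1 - cos ((j-k) v))`.
The change of variables `(u, t) ↦ ((u+t)/2, u-t)` has Jacobian `-1`, so
`E = |I| / (8π²) · ∫_{-γ}^{γ} Σ_{j,k} (1 - cos ((j-k) v)) dv`. Replacing `1 - cos x` by `x²/2`
costs at most `x⁴/24`, and `Σ_{j,k} (j-k)² = n²(n²-1)/6`; hence `E` is the main term up to a
relative error `n⁻² + 3γ²n²/10`, and `C = 1` works.
-/

open MeasureTheory Real Finset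

lemma Real.cos_le_one_sub_sq_div_two_add_pow_four_div (x : ℝ) :
    cos x ≤ 1 - x ^ 2 / 2 + x ^ 4 / 24 := by
  wlog hx : 0 ≤ x generalizing x
  · simpa [Even.neg_pow (by decide : Even 2), Even.neg_pow (by decide : Even 4)] using
      this (-x) (by linarith)
  have h : ∫ t in (0 : ℝ)..x, (t - t ^ 3 / 6) ≤ ∫ t in (0 : ℝ)..x, sin t :=
    intervalIntegral.integral_mono_on hx (by apply Continuous.intervalIntegrable; fun_prop)
      (continuous_sin.intervalIntegrable _ _) fun t ht => sin_ge_sub_cube ht.1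
  simp [integral_sin, intervalIntegral.integral_sub, intervalIntegral.integral_div] at h
  linarith

lemma Real.abs_one_sub_cos_sub_sq_div_two_le (x : ℝ) : |1 - cos x - x ^ 2 / 2| ≤ x ^ 4 / 24 := by
  rw [abs_le]
  constructor <;>
    linarith [cos_le_one_sub_sq_div_two_add_pow_four_div x, one_sub_sq_div_two_le_cos (x := x)]

noncomputable def midpointSubEquiv : (ℝ × ℝ) ≃ₗ[ℝ] (ℝ × ℝ) where
  toFun p := ((p.1 + p.2) / 2, p.1 - p.2)
  invFun q := (q.1 + q.2 / 2, q.1 - q.2 / 2)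
  map_add' p q := by ext <;> simp <;> ring
  map_smul' c p := by ext <;> simp <;> ring
  left_inv p := by ext <;> simp <;> ring
  right_inv q := by ext <;> simp

lemma det_midpointSubEquiv : LinearMap.det (midpointSubEquiv : (ℝ × ℝ) →ₗ[ℝ] (ℝ × ℝ)) = -1 := by
  rw [← LinearMap.det_toMatrix (Module.Basis.finTwoProd ℝ), Matrix.det_fin_two]
  simp [LinearMap.toMatrix_apply, midpointSubEquiv]
  norm_num

lemma measurePreserving_midpointSubEquiv : MeasurePreserving midpointSubEquiv volume volume := by
  refine ⟨midpointSubEquiv.continuous_of_finiteDimensional.measurable, ?_⟩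
  have h := Measure.map_linearMap_addHaar_eq_smul_addHaar (volume : Measure (ℝ × ℝ))
    (f := (midpointSubEquiv : (ℝ × ℝ) →ₗ[ℝ] (ℝ × ℝ))) (by simp [det_midpointSubEquiv])
  simpa [det_midpointSubEquiv] using h

lemma setIntegral_midpoint_sub_mem {E : Type*} [NormedAddCommGroup E] [NormedSpace ℝ E]
    (F : ℝ → E) (A B : Set ℝ) :
    ∫ p in {p : ℝ × ℝ | (p.1 + p.2) / 2 ∈ A ∧ p.1 - p.2 ∈ B}, F (p.1 - p.2) =
      volume.real A • ∫ v in B, F v := by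
  have hemb : MeasurableEmbedding midpointSubEquiv :=
    midpointSubEquiv.toContinuousLinearEquiv.toHomeomorph.measurableEmbedding
  have h := measurePreserving_midpointSubEquiv.setIntegral_preimage_emb hemb
    (fun q => F q.2) (A ×ˢ B)
  have hprod := integral_prod_smul (μ := volume.restrict A) (ν := volume.restrict B)
    (fun _ => (1 : ℝ)) F
  rw [Measure.volume_eq_prod, ← Measure.prod_restrict] at h
  simp only [one_smul, integral_const, smul_eq_mul, mul_one,
    measureReal_restrict_apply_univ] at hprod
  exact h.trans hprod

lemma sum_range_natCast (n : ℕ) : ∑ j ∈ range n, (j : ℝ) = n * (n - 1) / 2 := by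
  induction n with
  | zero => simp
  | succ m ih => rw [sum_range_succ, ih]; push_cast; ring

lemma sum_range_natCast_sq (n : ℕ) :
    ∑ j ∈ range n, (j : ℝ) ^ 2 = n * (n - 1) * (2 * n - 1) / 6 := by
  induction n with
  | zero => simp
  | succ m ih => rw [sum_range_succ, ih]; push_cast; ring

lemma sum_range_sum_range_sub_sq (n : ℕ) :
    ∑ j ∈ range n, ∑ k ∈ range n, ((j : ℝ) - k) ^ 2 = n ^ 2 * (n ^ 2 - 1) / 6 := by
  simp only [sub_sq, sum_add_distrib, sum_sub_distrib, ← mul_sum, ← sum_mul, sum_const,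
    card_range, nsmul_eq_mul, sum_range_natCast, sum_range_natCast_sq]
  ring

noncomputable def cueKernel (n : ℕ) (x : ℝ) : ℂ :=
  (1 / (2 * (π : ℂ))) * ∑ j ∈ range n, Complex.exp ((j : ℂ) * (x : ℂ) * Complex.I)

noncomputable def cueGap (n : ℕ) (v : ℝ) : ℝ :=
  ∑ j ∈ range n, ∑ k ∈ range n, (1 - cos (((j : ℝ) - k) * v))

lemma sum_range_sum_range_sin_sub_mul (n : ℕ) (v : ℝ) :
    ∑ j ∈ range n, ∑ k ∈ range n, sin (((j : ℝ) - k) * v) = 0 := by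
  have h : ∑ j ∈ range n, ∑ k ∈ range n, sin (((j : ℝ) - k) * v) =
      ∑ j ∈ range n, ∑ k ∈ range n, -sin (((j : ℝ) - k) * v) := by
    rw [sum_comm]
    exact sum_congr rfl fun j _ => sum_congr rfl fun k _ => by rw [← sin_neg, ← neg_mul, neg_sub]
  simp only [sum_neg_distrib] at h
  linarith

lemma cueKernel_mul_cueKernel_neg (n : ℕ) (v : ℝ) :
    cueKernel n v * cueKernel n (-v) =
      ((∑ j ∈ range n, ∑ k ∈ range n, cos (((j : ℝ) - k) * v)) / (4 * π ^ 2) : ℝ) := by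
  have hterm : ∀ j k : ℕ,
      Complex.exp (j * v * Complex.I) * Complex.exp (k * ((-v : ℝ) : ℂ) * Complex.I) =
        cos (((j : ℝ) - k) * v) + sin (((j : ℝ) - k) * v) * Complex.I := by
    intro j k
    rw [← Complex.exp_add, Complex.ofReal_cos, Complex.ofReal_sin, ← Complex.exp_mul_I]
    push_cast
    ring_nf
  simp only [cueKernel, mul_mul_mul_comm, sum_mul_sum, hterm, sum_add_distrib, ← sum_mul]
  simp only [← Complex.ofReal_sum, sum_range_sum_range_sin_sub_mul]
  generalize ∑ j ∈ range n, ∑ k ∈ range n, cos (((j : ℝ) - k) * v) = S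
  push_cast
  field_simp
  ring

lemma cueKernel_zero_mul_self_sub (n : ℕ) (v : ℝ) :
    cueKernel n 0 * cueKernel n 0 - cueKernel n v * cueKernel n (-v) =
      (cueGap n v / (4 * π ^ 2) : ℝ) := by
  have hK0 : cueKernel n 0 = n / (2 * π) := by simp [cueKernel, div_eq_inv_mul]
  rw [hK0, cueKernel_mul_cueKernel_neg, cueGap]
  simp only [sum_sub_distrib, sum_const, card_range, nsmul_eq_mul, mul_one]
  generalize ∑ j ∈ range n, ∑ k ∈ range n, cos (((j : ℝ) - k) * v) = S
  push_cast
  field_simp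
  ring

lemma abs_cueGap_sub_le (n : ℕ) (v : ℝ) :
    |cueGap n v - n ^ 2 * (n ^ 2 - 1) / 12 * v ^ 2| ≤ n ^ 6 / 24 * v ^ 4 := by
  have hsq : (n : ℝ) ^ 2 * (n ^ 2 - 1) / 12 * v ^ 2 =
      ∑ j ∈ range n, ∑ k ∈ range n, (((j : ℝ) - k) * v) ^ 2 / 2 := by
    simp only [mul_pow, ← sum_div, ← sum_mul, sum_range_sum_range_sub_sq]
    ring
  have hterm : ∀ j ∈ range n, ∀ k ∈ range n,
      |1 - cos (((j : ℝ) - k) * v) - (((j : ℝ) - k) * v) ^ 2 / 2| ≤ n ^ 4 / 24 * v ^ 4 := by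
    intro j hj k hk
    have hjk : |(j : ℝ) - k| ≤ n := by
      rw [mem_range] at hj hk
      rw [abs_le]
      constructor <;> linarith [(Nat.cast_lt (α := ℝ)).2 hj, (Nat.cast_lt (α := ℝ)).2 hk]
    calc _ ≤ (((j : ℝ) - k) * v) ^ 4 / 24 := abs_one_sub_cos_sub_sq_div_two_le _
      _ = |(j : ℝ) - k| ^ 4 * v ^ 4 / 24 := by
        rw [mul_pow, ← abs_pow, abs_of_nonneg (by positivity)]
      _ ≤ n ^ 4 / 24 * v ^ 4 := by
        rw [div_mul_eq_mul_div]; gcongr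
  calc |cueGap n v - n ^ 2 * (n ^ 2 - 1) / 12 * v ^ 2|
      = |∑ j ∈ range n, ∑ k ∈ range n,
          (1 - cos (((j : ℝ) - k) * v) - (((j : ℝ) - k) * v) ^ 2 / 2)| := by
        rw [hsq, cueGap, ← sum_sub_distrib]; simp only [← sum_sub_distrib]
    _ ≤ ∑ j ∈ range n, ∑ k ∈ range n, (n : ℝ) ^ 4 / 24 * v ^ 4 :=
        (abs_sum_le_sum_abs _ _).trans <| sum_le_sum fun j hj =>
          (abs_sum_le_sum_abs _ _).trans <| sum_le_sum fun k hk => hterm j hj k hk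
    _ = n ^ 6 / 24 * v ^ 4 := by simp; ring

lemma continuous_cueGap (n : ℕ) : Continuous (cueGap n) := by
  unfold cueGap
  fun_prop

lemma abs_integral_cueGap_sub_le (n : ℕ) {γ : ℝ} (hγ : 0 ≤ γ) :
    |(∫ v in -γ..γ, cueGap n v) - n ^ 2 * (n ^ 2 - 1) / 18 * γ ^ 3| ≤ n ^ 6 / 60 * γ ^ 5 := by
  have hleading : ∫ v in -γ..γ, (n : ℝ) ^ 2 * (n ^ 2 - 1) / 12 * v ^ 2 =
      n ^ 2 * (n ^ 2 - 1) / 18 * γ ^ 3 := by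
    simp [integral_pow]
    ring
  have herror : ∫ v in -γ..γ, (n : ℝ) ^ 6 / 24 * v ^ 4 = n ^ 6 / 60 * γ ^ 5 := by
    simp [integral_pow]
    ring
  rw [← hleading, ← herror, ← intervalIntegral.integral_sub
    ((continuous_cueGap n).intervalIntegrable _ _)
    (by apply Continuous.intervalIntegrable; fun_prop)]
  exact intervalIntegral.norm_integral_le_of_norm_le (by linarith)
    (ae_of_all volume fun v _ => (Real.norm_eq_abs _).trans_le (abs_cueGap_sub_le n v))
    (by apply Continuous.intervalIntegrable; fun_prop)

lemma abs_integral_cueGap_sub_leading_le {n : ℕ} (hn : 1 ≤ n) {γ : ℝ} (hγ : 0 < γ) :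
    |(∫ v in -γ..γ, cueGap n v) - γ ^ 3 * n ^ 4 / 18| ≤
      γ ^ 3 * n ^ 4 / 18 * ((n : ℝ)⁻¹ + γ ^ 2 * n ^ 2 + (γ ^ 2 * n ^ 2) ^ 3) := by
  have hn' : (1 : ℝ) ≤ n := by exact_mod_cast hn
  have h := abs_integral_cueGap_sub_le n hγ.le
  have hsq : γ ^ 3 * n ^ 2 ≤ γ ^ 3 * n ^ 3 := by gcongr; linarith
  have hexpand : γ ^ 3 * n ^ 4 / 18 * ((n : ℝ)⁻¹ + γ ^ 2 * n ^ 2 + (γ ^ 2 * n ^ 2) ^ 3) =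
      γ ^ 3 * n ^ 3 / 18 + n ^ 6 / 18 * γ ^ 5 + γ ^ 9 * n ^ 10 / 18 := by
    field_simp
  have hpos₀ : 0 ≤ γ ^ 3 * (n : ℝ) ^ 2 := by positivity
  have hpos₁ : 0 ≤ γ ^ 5 * (n : ℝ) ^ 6 := by positivity
  have hpos₂ : 0 ≤ γ ^ 9 * (n : ℝ) ^ 10 := by positivity
  rw [hexpand, abs_le]
  rw [abs_le] at h
  constructor <;> linarith [h.1, h.2]

/-- **First-moment estimate for the CUE kernel.**  With `K n` the CUE projection kernel
`K n x = (1/(2π)) Σ_{j<n} e^{ijx}` and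
`Ω = {(u,t) : (u+t)/2 ∈ I, |u-t| < γ}` for an interval `I = [a, b) ⊆ [0, 2π)`,
the quantity `E = (1/2) ∫∫_Ω (K n 0 · K n 0 - K n (u-t) · K n (t-u)) du dt` satisfies
`|E - |I| γ³ n⁴ / (144π²)| ≤ C |I| γ³ n⁴ / (144π²) · (n⁻¹ + γ²n² + (γ²n²)³)`
for an absolute constant `C`. -/
theorem first_moment_CUE :
    ∃ C : ℝ, ∀ n : ℕ, 1 ≤ n → ∀ γ : ℝ, 0 < γ → ∀ a b : ℝ,
      0 ≤ a → a ≤ b → b ≤ 2 * π →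
      ∀ K : ℝ → ℂ,
      (K = fun x : ℝ => (1 / (2 * (π : ℂ))) *
        ∑ j ∈ Finset.range n, Complex.exp ((j : ℂ) * (x : ℂ) * Complex.I)) →
      ∀ Ω : Set (ℝ × ℝ),
      (Ω = {p : ℝ × ℝ | (p.1 + p.2) / 2 ∈ Set.Ico a b ∧ |p.1 - p.2| < γ}) →
      ∀ E : ℂ,
      (E = (1 / 2) * ∫ p in Ω, (K 0 * K 0 - K (p.1 - p.2) * K (p.2 - p.1))) →
      ‖E - ((b - a) * γ ^ 3 * (n : ℝ) ^ 4 / (144 * π ^ 2) : ℝ)‖ ≤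
        C * ((b - a) * γ ^ 3 * (n : ℝ) ^ 4 / (144 * π ^ 2)) *
          ((n : ℝ)⁻¹ + γ ^ 2 * (n : ℝ) ^ 2 + (γ ^ 2 * (n : ℝ) ^ 2) ^ 3) := by
  refine ⟨1, fun n hn γ hγ a b _ hab _ K hK Ω hΩ E hE => ?_⟩
  obtain rfl : K = cueKernel n := hK
  have hΩ' : Ω = {p : ℝ × ℝ | (p.1 + p.2) / 2 ∈ Set.Ico a b ∧ p.1 - p.2 ∈ Set.Ioo (-γ) γ} := by
    simpa only [Set.mem_Ioo, abs_lt] using hΩ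
  have hE' : E = ((b - a) / (8 * π ^ 2) * ∫ v in -γ..γ, cueGap n v : ℝ) := by
    simp only [hE, hΩ', ← neg_sub (Prod.fst _) (Prod.snd _), cueKernel_zero_mul_self_sub,
      integral_complex_ofReal]
    rw [setIntegral_midpoint_sub_mem (fun v => cueGap n v / (4 * π ^ 2)),
      volume_real_Ico_of_le hab, smul_eq_mul, ← integral_Ioc_eq_integral_Ioo,
      ← intervalIntegral.integral_of_le (by linarith), intervalIntegral.integral_div]
    push_cast
    ring
  have hscale : 0 ≤ (b - a) / (8 * π ^ 2) := by have := sub_nonneg.2 hab; positivity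
  rw [hE', ← Complex.ofReal_sub, Complex.norm_real, Real.norm_eq_abs]
  calc _ = (b - a) / (8 * π ^ 2) * |(∫ v in -γ..γ, cueGap n v) - γ ^ 3 * n ^ 4 / 18| := by
        conv_rhs => rw [← abs_of_nonneg hscale, ← abs_mul]
        congr 1
        ring
    _ ≤ (b - a) / (8 * π ^ 2) * (γ ^ 3 * n ^ 4 / 18 *
          ((n : ℝ)⁻¹ + γ ^ 2 * n ^ 2 + (γ ^ 2 * n ^ 2) ^ 3)) := by
        gcongr
        exact abs_integral_cueGap_sub_leading_le hn hγ
    _ = _ := by ring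
end

section
/- Let n ≥ 1 and let η₀, …, η_{n−1} : ℝ → ℝ be measurable functions orthonormal in L²(ℝ): ∫_ℝ ηᵢ(x)·ηⱼ(x) dx = δ_{ij}. Define K(x,y) = Σ_{j=0}^{n−1} ηⱼ(x)·ηⱼ(y). Then for every 1 ≤ l ≤ n and all fixed real numbers t₁, …, t_{l−1}: ∫_ℝ det[ (K(tᵢ,tⱼ))_{1≤i,j≤l} ] dt_l = (n − l + 1) · det[ (K(tᵢ,tⱼ))_{1≤i,j≤l−1} ] (where for l = 1 the empty determinant on the right is 1). -/
/-!
Expanding the `(m+1) × (m+1)` determinant along its last row and column gives the bordered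
determinant formula
`det = K(s,s) · det B - ∑ᵢⱼ adj(B)ⱼᵢ · K(tᵢ,s) K(s,tⱼ)`, where `B = (K(tᵢ,tⱼ))` is the
leading block. Integrating in `s`, orthonormality gives `∫ K(s,s) ds = n` and the reproducing
property `∫ K(x,s) K(s,y) ds = K(x,y)`, so the right-hand side becomes
`n · det B - tr (adj(B) · B) = (n - m) · det B`.
-/

open MeasureTheory

namespace Matrix

variable {R : Type*} [CommRing R] {m : ℕ}

theorem det_eq_det_submatrix_castSucc_of_row_last_eq_single
    (M : Matrix (Fin (m + 1)) (Fin (m + 1)) R) (h : M (Fin.last m) = Pi.single (Fin.last m) 1) :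
    M.det = (M.submatrix Fin.castSucc Fin.castSucc).det := by
  rw [det_succ_row M (Fin.last m), Fin.sum_univ_castSucc, h]
  simp [Fin.succAbove_last]

theorem adjugate_last_last (M : Matrix (Fin (m + 1)) (Fin (m + 1)) R) :
    M.adjugate (Fin.last m) (Fin.last m) = (M.submatrix Fin.castSucc Fin.castSucc).det := by
  rw [adjugate_apply, det_eq_det_submatrix_castSucc_of_row_last_eq_single _ (by simp)]
  congr 1
  ext i k
  simp [(Fin.castSucc_lt_last i).ne]

theorem adjugate_castSucc_last_eq_neg_cramer (M : Matrix (Fin (m + 1)) (Fin (m + 1)) R)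
    (j : Fin m) :
    M.adjugate j.castSucc (Fin.last m) =
      -cramer (M.submatrix Fin.castSucc Fin.castSucc) (fun i => M i.castSucc (Fin.last m)) j := by
  -- swapping column `j` with the last one turns the last row into the last basis vector
  set X := (M.updateRow (Fin.last m) (Pi.single j.castSucc 1)).submatrix id
    (Equiv.swap j.castSucc (Fin.last m))
  have hX : X.det = -M.adjugate j.castSucc (Fin.last m) := by
    rw [det_permute', Equiv.Perm.sign_swap (Fin.castSucc_lt_last j).ne, adjugate_apply]; simp
  rw [← neg_eq_iff_eq_neg, ← hX, cramer_apply,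
    det_eq_det_submatrix_castSucc_of_row_last_eq_single]
  · congr 1
    ext i k
    rcases eq_or_ne k j with rfl | hk
    · simp [X]
    · simp [X, Equiv.swap_apply_of_ne_of_ne ((Fin.castSucc_injective _).ne hk)
        (Fin.castSucc_lt_last k).ne, hk]
  · ext k
    simp only [X, submatrix_apply, id_eq, updateRow_self, Pi.single_apply,
      Equiv.swap_apply_eq_iff, Equiv.swap_apply_left]

theorem det_succ_eq_last_mul_det_sub_adjugate (M : Matrix (Fin (m + 1)) (Fin (m + 1)) R) :
    M.det = M (Fin.last m) (Fin.last m) * (M.submatrix Fin.castSucc Fin.castSucc).det -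
      ∑ j, ∑ i, M (Fin.last m) j.castSucc *
        (M.submatrix Fin.castSucc Fin.castSucc).adjugate j i * M i.castSucc (Fin.last m) := by
  simp only [det_eq_sum_mul_adjugate_row M (Fin.last m), Fin.sum_univ_castSucc,
    adjugate_last_last, adjugate_castSucc_last_eq_neg_cramer, cramer_eq_adjugate_mulVec, mulVec,
    dotProduct, mul_neg, Finset.sum_neg_distrib, Finset.mul_sum, mul_assoc]
  ring

theorem det_of_snoc {α : Type*} (K : α → α → R) (t : Fin m → α) (s : α) :
    (of fun i j : Fin (m + 1) =>
        K ((Fin.snoc t s : Fin (m + 1) → α) i) ((Fin.snoc t s : Fin (m + 1) → α) j)).det =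
      K s s * (of fun i j => K (t i) (t j)).det -
        ∑ j, ∑ i, (of fun i j => K (t i) (t j)).adjugate j i * (K (t i) s * K s (t j)) := by
  have hB : (of fun i j : Fin (m + 1) => K ((Fin.snoc t s : Fin (m + 1) → α) i)
      ((Fin.snoc t s : Fin (m + 1) → α) j)).submatrix Fin.castSucc Fin.castSucc =
      of fun i j => K (t i) (t j) := by
    ext; simp
  rw [det_succ_eq_last_mul_det_sub_adjugate, hB]
  simp only [of_apply, Fin.snoc_last, Fin.snoc_castSucc]
  congr 1
  exact Finset.sum_congr rfl fun j _ => Finset.sum_congr rfl fun i _ => by ring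

theorem sum_sum_adjugate_mul_eq_card_mul_det {n : Type*} [Fintype n] [DecidableEq n]
    (A : Matrix n n R) :
    ∑ j, ∑ i, A.adjugate j i * A i j = (Fintype.card n : R) * A.det := by
  have h := congrArg trace (adjugate_mul A)
  simpa [trace, mul_apply, mul_comm] using h

end Matrix

section ProjectionKernel

variable {α ι : Type*} {η : ι → α → ℝ}

def projKernel [Fintype ι] (η : ι → α → ℝ) (x y : α) : ℝ := ∑ j, η j x * η j y

theorem projKernel_mul_projKernel [Fintype ι] (x y s : α) :
    projKernel η x s * projKernel η s y = ∑ j, ∑ k, η j x * η k y * (η j s * η k s) := by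
  simp only [projKernel, Finset.sum_mul_sum]
  exact Finset.sum_congr rfl fun j _ => Finset.sum_congr rfl fun k _ => by ring

variable [MeasurableSpace α] {μ : Measure α}

theorem integrable_mul_of_memLp_two (hL2 : ∀ i, MemLp (η i) 2 μ) (i j : ι) :
    Integrable (fun s => η i s * η j s) μ :=
  (hL2 i).integrable_mul (hL2 j)

variable [Fintype ι]

theorem integrable_projKernel_diag (hL2 : ∀ i, MemLp (η i) 2 μ) :
    Integrable (fun s => projKernel η s s) μ :=
  integrable_finsetSum _ fun j _ => integrable_mul_of_memLp_two hL2 j j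

theorem integral_projKernel_diag [DecidableEq ι] (hL2 : ∀ i, MemLp (η i) 2 μ)
    (horth : ∀ i j, ∫ x, η i x * η j x ∂μ = if i = j then 1 else 0) :
    ∫ s, projKernel η s s ∂μ = Fintype.card ι := by
  simp [projKernel, integral_finsetSum _ fun j _ => integrable_mul_of_memLp_two hL2 j j, horth]

theorem integrable_projKernel_mul (hL2 : ∀ i, MemLp (η i) 2 μ) (x y : α) :
    Integrable (fun s => projKernel η x s * projKernel η s y) μ := by
  simp only [projKernel_mul_projKernel]
  exact integrable_finsetSum _ fun j _ => integrable_finsetSum _ fun k _ =>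
    (integrable_mul_of_memLp_two hL2 j k).const_mul _

theorem integral_projKernel_mul [DecidableEq ι] (hL2 : ∀ i, MemLp (η i) 2 μ)
    (horth : ∀ i j, ∫ x, η i x * η j x ∂μ = if i = j then 1 else 0) (x y : α) :
    ∫ s, projKernel η x s * projKernel η s y ∂μ = projKernel η x y := by
  simp only [projKernel_mul_projKernel]
  rw [integral_finsetSum _ fun j _ => integrable_finsetSum _ fun k _ =>
    (integrable_mul_of_memLp_two hL2 j k).const_mul _]
  simp [integral_finsetSum _ fun k _ => (integrable_mul_of_memLp_two hL2 _ k).const_mul _,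
    integral_const_mul, horth, projKernel]

end ProjectionKernel

theorem gaudin_integrate_out_general
    (n : ℕ) (η : Fin n → ℝ → ℝ)
    (hL2 : ∀ i, MemLp (η i) 2 (volume : Measure ℝ))
    (horth : ∀ i j, (∫ x : ℝ, η i x * η j x) = if i = j then 1 else 0)
    (K : ℝ → ℝ → ℝ) (hK : ∀ x y, K x y = ∑ j, η j x * η j y)
    (m : ℕ) (t : Fin m → ℝ) :
    (∫ s : ℝ, Matrix.det (Matrix.of fun i j : Fin (m + 1) =>
        K ((Fin.snoc t s : Fin (m + 1) → ℝ) i) ((Fin.snoc t s : Fin (m + 1) → ℝ) j))) =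
      ((n : ℝ) - m) * Matrix.det (Matrix.of fun i j : Fin m => K (t i) (t j)) := by
  obtain rfl : K = projKernel η := funext₂ hK
  set B := Matrix.of fun i j : Fin m => projKernel η (t i) (t j)
  have hterm (i j : Fin m) : Integrable
      (fun s => B.adjugate j i * (projKernel η (t i) s * projKernel η s (t j))) :=
    (integrable_projKernel_mul hL2 _ _).const_mul _
  calc _ = ∫ s, (projKernel η s s * B.det -
        ∑ j, ∑ i, B.adjugate j i * (projKernel η (t i) s * projKernel η s (t j))) := by
        congr with s
        exact Matrix.det_of_snoc _ t s
    _ = n * B.det - ∑ j, ∑ i, B.adjugate j i * B i j := by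
        rw [integral_sub ((integrable_projKernel_diag hL2).mul_const _)
            (integrable_finsetSum _ fun j _ => integrable_finsetSum _ fun i _ => hterm i j),
          integral_mul_const, integral_projKernel_diag hL2 horth, Fintype.card_fin,
          integral_finsetSum _ fun j _ => integrable_finsetSum _ fun i _ => hterm i j]
        simp_rw [integral_finsetSum _ fun i _ => hterm i _, integral_const_mul,
          integral_projKernel_mul hL2 horth]
        rfl
    _ = (n - m) * B.det := by
        rw [Matrix.sum_sum_adjugate_mul_eq_card_mul_det, Fintype.card_fin]
        ring

/-- **Gaudin's integrating-out lemma.**  Let `η 0, …, η (n-1)` be measurable functions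
orthonormal in `L²(ℝ)` and `K x y = Σ_j η j x * η j y` the associated projection kernel.
Then for `1 ≤ l ≤ n` (written `l = m + 1`) and fixed `t₁, …, t_m`, integrating the
`l × l` determinant `det [K tᵢ tⱼ]` over the last variable gives
`(n - l + 1)` times the `(l-1) × (l-1)` determinant. -/
theorem gaudin_integrate_out
    (n : ℕ) (hn : 1 ≤ n) (η : Fin n → ℝ → ℝ)
    (hmeas : ∀ i, Measurable (η i))
    (hL2 : ∀ i, MemLp (η i) 2 (volume : Measure ℝ))
    (horth : ∀ i j, (∫ x : ℝ, η i x * η j x) = if i = j then 1 else 0)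
    (K : ℝ → ℝ → ℝ) (hK : ∀ x y, K x y = ∑ j, η j x * η j y)
    (m : ℕ) (hm : m + 1 ≤ n) (t : Fin m → ℝ) :
    (∫ s : ℝ, Matrix.det (Matrix.of fun i j : Fin (m + 1) =>
        K ((Fin.snoc t s : Fin (m + 1) → ℝ) i) ((Fin.snoc t s : Fin (m + 1) → ℝ) j))) =
      ((n : ℝ) - m) * Matrix.det (Matrix.of fun i j : Fin m => K (t i) (t j)) :=
  gaudin_integrate_out_general n η hL2 horth K hK m t
end

section
/- For every ε > 0 there is a constant C (depending only on ε) such that for all integers n ≥ 1 and all real x with |x| ≤ (√2 − ε)·√n, | Φ(x, n+1)/Φ(x, n) − ( x + i·√(2n − x²) )/√(2n) | ≤ C/n. -/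
/-!
Write `x / √(2m) = cos θₘ` with `θₘ ∈ [0, π]`. The base of the power in `Φ` is then `e^{iθₘ}`, so
`Φ(x, m) = exp(i(π/4 + fₘ))` with `fₘ = (m - 1/2) θₘ - x √(2m - x²) / 2`, and the comparison term is
`e^{iθₙ}`. Since `|e^{ia} - e^{ib}| ≤ |a - b|`, it suffices to show `|f_{n+1} - fₙ - θₙ| = O(1/n)`.
As functions of a real variable, `f'ₘ = θₘ - x / (4m√(2m - x²))` and `θ'ₘ = x / (2m√(2m - x²))`.
The hypothesis gives `x² ≤ (2 - δ)n` with `δ = min ε 1`, hence `|x| ≤ √(2/δ) √(2m - x²)` for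
`m ≥ n`, so on `[n, n + 1]` both `θ'` and the correction term in `f'` are `O(1/n)`, and the mean
value theorem finishes.
-/

open Real

namespace Complex

lemma exp_cpow {z : ℂ} (h₁ : -π < z.im) (h₂ : z.im ≤ π) (w : ℂ) :
    exp z ^ w = exp (z * w) := by
  rw [cpow_def_of_ne_zero (exp_ne_zero z), log_exp h₁ h₂]

lemma norm_exp_I_mul_ofReal_sub_exp_I_mul_ofReal_le (a b : ℝ) :
    ‖exp (I * a) - exp (I * b)‖ ≤ |a - b| := by
  have h : exp (I * a) - exp (I * b) =
      exp (I * b) * (exp (I * (a - b : ℝ)) - 1) := by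
    rw [mul_sub, ← exp_add]
    push_cast
    ring_nf
  rw [h, norm_mul, norm_exp_I_mul_ofReal, one_mul]
  exact Real.norm_exp_I_mul_ofReal_sub_one_le

end Complex

lemma sq_le_two_sub_min_mul {ε x N : ℝ} (hε : 0 < ε) (hN : 0 ≤ N)
    (hx : |x| ≤ (√2 - ε) * √N) : x ^ 2 ≤ (2 - min ε 1) * N := by
  have h2 : √2 ^ 2 = 2 := sq_sqrt two_pos.le
  have h1 : 1 ≤ √2 := one_le_sqrt.2 one_le_two
  have hxδ : |x| ≤ (√2 - min ε 1) * √N :=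
    hx.trans (mul_le_mul_of_nonneg_right (by linarith [min_le_left ε 1]) (sqrt_nonneg N))
  calc x ^ 2 = |x| ^ 2 := (sq_abs x).symm
    _ ≤ ((√2 - min ε 1) * √N) ^ 2 := pow_le_pow_left₀ (abs_nonneg x) hxδ 2
    _ = (√2 - min ε 1) ^ 2 * N := by rw [mul_pow, sq_sqrt hN]
    _ ≤ (2 - min ε 1) * N := by
        gcongr
        nlinarith [min_le_right ε 1, lt_min hε one_pos]

namespace PlancherelRotach

noncomputable def angle (x m : ℝ) : ℝ := arccos (x / √(2 * m))

noncomputable def phase (x m : ℝ) : ℝ := (m - 1 / 2) * angle x m - x * √(2 * m - x ^ 2) / 2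

lemma cos_angle {x m : ℝ} (hx : x ^ 2 ≤ 2 * m) : cos (angle x m) = x / √(2 * m) := by
  have h : |x / √(2 * m)| ≤ 1 := by
    rw [abs_div, abs_of_nonneg (sqrt_nonneg _), ← sqrt_sq_eq_abs]
    exact div_le_one_of_le₀ (sqrt_le_sqrt hx) (sqrt_nonneg _)
  exact cos_arccos (abs_le.1 h).1 (abs_le.1 h).2

lemma sin_angle {x m : ℝ} (hm : 0 ≤ m) : sin (angle x m) = √(1 - x ^ 2 / (2 * m)) := by
  rw [angle, sin_arccos, div_pow, sq_sqrt (by positivity)]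

lemma sqrt_one_sub_div {x m : ℝ} (hm : 0 < m) :
    √(1 - x ^ 2 / (2 * m)) = √(2 * m - x ^ 2) / √(2 * m) := by
  rw [← sqrt_div' _ (by positivity), sub_div, div_self (by positivity)]

lemma exp_angle_mul_I {x m : ℝ} (hx : x ^ 2 ≤ 2 * m) :
    Complex.exp (angle x m * Complex.I) =
      ((x / √(2 * m) : ℝ) : ℂ) + Complex.I * ((√(1 - x ^ 2 / (2 * m)) : ℝ) : ℂ) := by
  rw [Complex.exp_mul_I, ← Complex.ofReal_cos, ← Complex.ofReal_sin, cos_angle hx,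
    sin_angle (by nlinarith)]
  ring

lemma factor_eq_exp_phase {x : ℝ} {m : ℕ} (hx : x ^ 2 ≤ 2 * m) :
    Complex.exp (Complex.I * (π : ℂ) / 4) *
      (((x / Real.sqrt (2 * m) : ℝ) : ℂ) +
          Complex.I * ((Real.sqrt (1 - x ^ 2 / (2 * m)) : ℝ) : ℂ)) ^ ((m : ℂ) - 1 / 2) *
      Complex.exp (-(Complex.I / 2) * (x : ℂ) * ((Real.sqrt (2 * m - x ^ 2) : ℝ) : ℂ)) =
    Complex.exp (Complex.I * (π / 4 + phase x m : ℝ)) := by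
  have him : ((angle x m : ℂ) * Complex.I).im = angle x m := by simp
  have h₀ : 0 ≤ angle x m := arccos_nonneg _
  have hπ : angle x m ≤ π := arccos_le_pi _
  rw [← exp_angle_mul_I hx, Complex.exp_cpow (by rw [him]; linarith [pi_pos]) (by rwa [him]),
    ← Complex.exp_add, ← Complex.exp_add, phase]
  congr 1
  push_cast
  ring

lemma hasDerivAt_angle {x m : ℝ} (hm : 0 < m) (hx : x ^ 2 < 2 * m) :
    HasDerivAt (angle x) (x / (2 * m * √(2 * m - x ^ 2))) m := by
  have ha : 0 < √(2 * m) := by positivity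
  have hs : 0 < √(2 * m - x ^ 2) := sqrt_pos.2 (by linarith)
  have hu : |x / √(2 * m)| < 1 := by
    rw [abs_div, abs_of_pos ha, div_lt_one ha, ← sqrt_sq_eq_abs]
    exact sqrt_lt_sqrt (sq_nonneg x) hx
  have hsqrt : HasDerivAt (fun m => √(2 * m)) (2 / (2 * √(2 * m))) m := by
    simpa using ((hasDerivAt_id' m).const_mul 2).sqrt (by positivity)
  refine ((hasDerivAt_arccos (abs_lt.1 hu).1.ne' (abs_lt.1 hu).2.ne).comp m
    ((hasDerivAt_const m x).div hsqrt ha.ne')).congr_deriv ?_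
  rw [div_pow, sq_sqrt (by positivity), sqrt_one_sub_div hm]
  field_simp
  ring

lemma hasDerivAt_phase {x m : ℝ} (hm : 0 < m) (hx : x ^ 2 < 2 * m) :
    HasDerivAt (phase x) (angle x m - x / (4 * m * √(2 * m - x ^ 2))) m := by
  have hs : 0 < √(2 * m - x ^ 2) := sqrt_pos.2 (by linarith)
  have hsqrt : HasDerivAt (fun m => √(2 * m - x ^ 2)) (2 / (2 * √(2 * m - x ^ 2))) m := by
    simpa using (((hasDerivAt_id' m).const_mul 2).sub_const (x ^ 2)).sqrt (by simp; linarith)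
  refine ((((hasDerivAt_id' m).sub_const (1 / 2)).mul (hasDerivAt_angle hm hx)).sub
    ((hsqrt.const_mul x).div_const 2)).congr_deriv ?_
  field_simp
  ring

lemma exp_I_mul_angle {x m : ℝ} (hm : 0 < m) (hx : x ^ 2 ≤ 2 * m) :
    Complex.exp (Complex.I * angle x m) =
      ((x : ℂ) + Complex.I * ((√(2 * m - x ^ 2) : ℝ) : ℂ)) / ((√(2 * m) : ℝ) : ℂ) := by
  have ha : ((√(2 * m) : ℝ) : ℂ) ≠ 0 := Complex.ofReal_ne_zero.2 (by positivity)
  rw [mul_comm, exp_angle_mul_I hx, sqrt_one_sub_div hm]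
  push_cast
  field_simp

lemma abs_le_sqrt_two_div_mul_sqrt {δ x m : ℝ} (hδ : 0 < δ) (hm : 0 ≤ m)
    (hx : x ^ 2 ≤ (2 - δ) * m) : |x| ≤ √(2 / δ) * √(2 * m - x ^ 2) := by
  rw [← sqrt_mul (by positivity), ← sqrt_sq_eq_abs]
  refine sqrt_le_sqrt ?_
  rw [div_mul_eq_mul_div, le_div_iff₀ hδ]
  nlinarith [mul_le_mul_of_nonneg_left hx (by linarith : (0 : ℝ) ≤ 2 + δ),
    mul_nonneg (sq_nonneg δ) hm]

lemma abs_div_mul_sqrt_le {δ x n m c : ℝ} (hδ : 0 < δ) (hc : 0 < c) (hn : 0 < n) (hnm : n ≤ m)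
    (hx : x ^ 2 ≤ (2 - δ) * n) : |x / (c * m * √(2 * m - x ^ 2))| ≤ √(2 / δ) / (c * n) := by
  have hδ2 : 0 ≤ 2 - δ := by nlinarith
  have hxm : x ^ 2 ≤ (2 - δ) * m := by nlinarith
  have hs : 0 < √(2 * m - x ^ 2) := sqrt_pos.2 (by nlinarith)
  have hden : 0 < c * m * √(2 * m - x ^ 2) := mul_pos (mul_pos hc (hn.trans_le hnm)) hs
  rw [abs_div, abs_of_pos hden]
  calc |x| / (c * m * √(2 * m - x ^ 2))
      ≤ √(2 / δ) * √(2 * m - x ^ 2) / (c * m * √(2 * m - x ^ 2)) :=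
        div_le_div_of_nonneg_right (abs_le_sqrt_two_div_mul_sqrt hδ (hn.le.trans hnm) hxm)
          hden.le
    _ = √(2 / δ) / (c * m) := by field_simp
    _ ≤ √(2 / δ) / (c * n) := by gcongr

lemma abs_angle_sub_angle_le {δ x n m : ℝ} (hδ : 0 < δ) (hn : 0 < n) (hnm : n ≤ m)
    (hx : x ^ 2 ≤ (2 - δ) * n) : |angle x m - angle x n| ≤ √(2 / δ) / (2 * n) * (m - n) := by
  have hderiv : ∀ t ∈ Set.Icc n m,
      HasDerivWithinAt (angle x) (x / (2 * t * √(2 * t - x ^ 2))) (Set.Icc n m) t :=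
    fun t ht => (hasDerivAt_angle (by linarith [ht.1]) (by nlinarith [ht.1])).hasDerivWithinAt
  have := (convex_Icc n m).norm_image_sub_le_of_norm_hasDerivWithin_le hderiv
    (fun t ht => abs_div_mul_sqrt_le hδ two_pos hn ht.1 hx) (Set.left_mem_Icc.2 hnm)
    (Set.right_mem_Icc.2 hnm)
  rwa [Real.norm_eq_abs, Real.norm_eq_abs, abs_of_nonneg (sub_nonneg.2 hnm)] at this

lemma abs_phase_add_one_sub_phase_sub_angle_le {δ x n : ℝ} (hδ : 0 < δ) (hn : 0 < n)
    (hx : x ^ 2 ≤ (2 - δ) * n) : |phase x (n + 1) - phase x n - angle x n| ≤ √(2 / δ) / n := by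
  have hderiv : ∀ t, n ≤ t →
      HasDerivAt (phase x) (angle x t - x / (4 * t * √(2 * t - x ^ 2))) t :=
    fun t ht => hasDerivAt_phase (by linarith) (by nlinarith)
  obtain ⟨ξ, hξ, hslope⟩ := exists_hasDerivAt_eq_slope (phase x) _ (lt_add_one n)
    (fun t ht => (hderiv t ht.1).continuousAt.continuousWithinAt)
    (fun t ht => hderiv t ht.1.le)
  rw [add_sub_cancel_left, div_one] at hslope
  rw [← hslope, sub_right_comm]
  calc |angle x ξ - angle x n - x / (4 * ξ * √(2 * ξ - x ^ 2))|
      ≤ |angle x ξ - angle x n| + |x / (4 * ξ * √(2 * ξ - x ^ 2))| := abs_sub _ _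
    _ ≤ √(2 / δ) / (2 * n) * (ξ - n) + √(2 / δ) / (4 * n) :=
        add_le_add (abs_angle_sub_angle_le hδ hn hξ.1.le hx)
          (abs_div_mul_sqrt_le hδ four_pos hn hξ.1.le hx)
    _ ≤ √(2 / δ) / n := by
        rw [mul_comm 2 n, mul_comm 4 n, ← div_div, ← div_div]
        nlinarith [hξ.2, div_nonneg (sqrt_nonneg (2 / δ)) hn.le]

lemma norm_exp_phase_div_sub_exp_angle_le {δ x n : ℝ} (hδ : 0 < δ) (hn : 0 < n)
    (hx : x ^ 2 ≤ (2 - δ) * n) :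
    ‖Complex.exp (Complex.I * (π / 4 + phase x (n + 1) : ℝ)) /
        Complex.exp (Complex.I * (π / 4 + phase x n : ℝ)) -
      Complex.exp (Complex.I * angle x n)‖ ≤ √(2 / δ) / n := by
  rw [← Complex.exp_sub, ← mul_sub, ← Complex.ofReal_sub]
  calc _ ≤ |π / 4 + phase x (n + 1) - (π / 4 + phase x n) - angle x n| :=
        Complex.norm_exp_I_mul_ofReal_sub_exp_I_mul_ofReal_le _ _
    _ = |phase x (n + 1) - phase x n - angle x n| := by ring_nf
    _ ≤ √(2 / δ) / n := abs_phase_add_one_sub_phase_sub_angle_le hδ hn hx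

end PlancherelRotach

/-- **Consecutive Plancherel–Rotach phases.**  Let `Φ x m` be the Plancherel–Rotach
phase.  For every `ε > 0` there is `C` such that for all `n ≥ 1` and all `x` with
`|x| ≤ (√2 - ε)√n`,
`|Φ x (n+1) / Φ x n - (x + i√(2n - x²)) / √(2n)| ≤ C / n`. -/
theorem consecutive_plancherel_rotach_phases
    (Φ : ℝ → ℕ → ℂ)
    (hΦ : ∀ x (m : ℕ), Φ x m = Complex.exp (Complex.I * (π : ℂ) / 4) *
      (((x / Real.sqrt (2 * m) : ℝ) : ℂ) +
          Complex.I * ((Real.sqrt (1 - x ^ 2 / (2 * m)) : ℝ) : ℂ)) ^ ((m : ℂ) - 1 / 2) *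
      Complex.exp (-(Complex.I / 2) * (x : ℂ) * ((Real.sqrt (2 * m - x ^ 2) : ℝ) : ℂ)))
    (ε : ℝ) (hε : 0 < ε) :
    ∃ C : ℝ, ∀ n : ℕ, 1 ≤ n → ∀ x : ℝ,
      |x| ≤ (Real.sqrt 2 - ε) * Real.sqrt n →
      ‖Φ x (n + 1) / Φ x n -
          ((x : ℂ) + Complex.I * ((Real.sqrt (2 * n - x ^ 2) : ℝ) : ℂ)) /
            ((Real.sqrt (2 * n) : ℝ) : ℂ)‖ ≤ C / n := by
  refine ⟨√(2 / min ε 1), fun n hn x hx => ?_⟩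
  have hδ : 0 < min ε 1 := lt_min hε one_pos
  have hn₀ : (0 : ℝ) < n := by exact_mod_cast hn
  have hxδ := sq_le_two_sub_min_mul hε hn₀.le hx
  have hxn : x ^ 2 ≤ 2 * (n : ℝ) := by nlinarith
  have hxn₁ : x ^ 2 ≤ 2 * ((n + 1 : ℕ) : ℝ) := by push_cast; linarith
  rw [hΦ, hΦ, PlancherelRotach.factor_eq_exp_phase hxn, PlancherelRotach.factor_eq_exp_phase hxn₁,
    ← PlancherelRotach.exp_I_mul_angle hn₀ hxn, Nat.cast_add_one]
  exact PlancherelRotach.norm_exp_phase_div_sub_exp_angle_le hδ hn₀ hxδ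
end
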